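/- arXiv:math/0302035 — 4 statements merged into one kernel-verified Lean document; each statement's English description precedes it below -/
import Mathlib

section
/- Let S be the localization of R = k°[q,q⁻¹] at the maximal ideal (q-1)R, and let Ã →φ̃ B̃ →ψ̃ C̃ be a complex of S-modules with C̃ torsionfree over S and ker ψ̃ finitely generated over S. If the reduced complex Ã/(q-1)Ã → B̃/(q-1)B̃ → C̃/(q-1)C̃ is exact, then the original complex Ã → B̃ → C̃ is exact. -/
/-!
By Nakayama's lemma it suffices to show `ker ψ ⊆ im φ + (q - 1) • ker ψ`, since `ker ψ` is finitely
generated and `q - 1` lies in the maximal ideal of the local ring `S`. Exactness modulo `q - 1`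
writes `b ∈ ker ψ` as `φ a + (q - 1) • b'`; applying `ψ` gives `(q - 1) • ψ b' = 0`, so `b' ∈ ker ψ`
because `C̃` has no `(q - 1)`-torsion.
-/

open LinearMap

section ExactOfExactMod

variable {R M N P : Type*} [CommRing R] [AddCommGroup M] [AddCommGroup N] [AddCommGroup P]
  [Module R M] [Module R N] [Module R P] {f : M →ₗ[R] N} {g : N →ₗ[R] P}

theorem LinearMap.ker_le_range_sup_span_smul_ker {π : R} (hπ : IsSMulRegular P π)
    (hgf : ∀ a, g (f a) = 0) (h : ∀ b ∈ ker g, ∃ a b', b = f a + π • b') :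
    ker g ≤ range f ⊔ Ideal.span {π} • ker g := by
  intro b hb
  obtain ⟨a, b', rfl⟩ := h b hb
  have hb' : b' ∈ ker g :=
    isSMulRegular_iff_right_eq_zero_of_smul.mp hπ _ (by simpa [hgf] using hb)
  exact Submodule.add_mem_sup (mem_range_self f a)
    (Submodule.smul_mem_smul (Ideal.mem_span_singleton_self π) hb')

theorem LinearMap.exact_of_exact_mod {π : R} (hπ : π ∈ (⊥ : Ideal R).jacobson)
    (hreg : IsSMulRegular P π) (hgf : ∀ a, g (f a) = 0) (hfg : (ker g).FG)
    (h : ∀ b ∈ ker g, ∃ a b', b = f a + π • b') : Function.Exact f g := by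
  rw [exact_iff]
  refine le_antisymm ?_ (by rintro _ ⟨a, rfl⟩; exact hgf a)
  exact Submodule.le_of_le_smul_of_le_jacobson_bot hfg
    ((Ideal.span_singleton_le_iff_mem _).mpr hπ) (ker_le_range_sup_span_smul_ker hreg hgf h)

end ExactOfExactMod

theorem LaurentPolynomial.T_ne_one {R : Type*} [Semiring R] [Nontrivial R] {n : ℤ} (hn : n ≠ 0) :
    (LaurentPolynomial.T n : LaurentPolynomial R) ≠ 1 := by
  rw [← LaurentPolynomial.T_zero]
  intro h
  have h1 := congrArg (fun p : LaurentPolynomial R => p.coeff n) h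
  simp only [LaurentPolynomial.T_apply, if_neg hn.symm] at h1
  exact one_ne_zero h1

/-- Let `S` be the localization of `R = k°[q,q⁻¹]` at the maximal
ideal `(q-1)R`, and let `Ã →φ B̃ →ψ C̃` be a complex of `S`-modules with `C̃`
torsionfree over `S` and `ker ψ` finitely generated over `S`. If the complex
reduced mod `(q-1)` is exact, then the original complex is exact. -/
theorem stmt_1 (k₀ : Type*) [Field k₀]
    (S : Type*) [CommRing S] [Algebra (LaurentPolynomial k₀) S]
    (hP : (Ideal.span {(LaurentPolynomial.T 1 - 1 : LaurentPolynomial k₀)}).IsPrime)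
    (hloc : IsLocalization
      (@Ideal.primeCompl _ _
        (Ideal.span {(LaurentPolynomial.T 1 - 1 : LaurentPolynomial k₀)}) hP) S)
    (A B C : Type*) [AddCommGroup A] [AddCommGroup B] [AddCommGroup C]
    [Module S A] [Module S B] [Module S C]
    (φ : A →ₗ[S] B) (ψ : B →ₗ[S] C)
    (hcomplex : ∀ a, ψ (φ a) = 0)
    (htfC : NoZeroSMulDivisors S C)
    (hfgker : (LinearMap.ker ψ).FG)
    -- exactness of the complex reduced modulo `q - 1`
    (hred : ∀ b : B,
      (∃ c : C, ψ b =
        (algebraMap (LaurentPolynomial k₀) S (LaurentPolynomial.T 1 - 1)) • c) ↔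
      (∃ (a : A) (b' : B), b = φ a +
        (algebraMap (LaurentPolynomial k₀) S (LaurentPolynomial.T 1 - 1)) • b')) :
    Function.Exact φ ψ := by
  set P := Ideal.span {(LaurentPolynomial.T 1 - 1 : LaurentPolynomial k₀)}
  have : IsLocalization.AtPrime S P := hloc
  have : IsLocalRing S := IsLocalization.AtPrime.isLocalRing S P
  set π := algebraMap (LaurentPolynomial k₀) S (LaurentPolynomial.T 1 - 1)
  have hπ0 : π ≠ 0 :=
    (map_ne_zero_iff _ (IsLocalization.injective S (Ideal.primeCompl_le_nonZeroDivisors P))).mpr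
      (sub_ne_zero.mpr (LaurentPolynomial.T_ne_one one_ne_zero))
  have hπ : π ∈ (⊥ : Ideal S).jacobson :=
    IsLocalRing.maximalIdeal_le_jacobson _
      ((IsLocalization.AtPrime.to_map_mem_maximal_iff S P _).mpr (Ideal.mem_span_singleton_self _))
  refine exact_of_exact_mod hπ
    (isSMulRegular_iff_right_eq_zero_of_smul.mpr fun _ hc =>
      (htfC.eq_zero_or_eq_zero_of_smul_eq_zero hc).resolve_left hπ0)
    hcomplex hfgker fun b hb => (hred b).mp ⟨0, by rw [mem_ker.mp hb, smul_zero]⟩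
end

section
/- Let R = k°[q,q⁻¹] with q transcendental over k° in a field k. Let H be an R-bialgebra and B a left H-comodule with structure map λ: B → H⊗_R B, both torsionfree as R-modules, and φ: A → B an R-module map with image contained in the coinvariants B^{co H} = {b : λ(b) = 1⊗b}. Suppose A = ⊕_j A_j and B = ⊕_j B_j with each B_j finitely generated over R, φ(A_j) ⊆ B_j, and λ(B_j) ⊆ H⊗_R B_j. If the coinvariants of B̄ = B/(q-1)B over the k°-bialgebra H̄ = H/(q-1)H equal the image of the induced map φ̄: Ā → B̄, then the coinvariants of k⊗_R B over the k-bialgebra k⊗_R H equal the image of id⊗φ: k⊗_R A → k⊗_R B. -/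
/-!
Over `R = k₀[q, q⁻¹]`, a Dedekind domain, torsion-free modules are flat, and `k` is
torsion-free (hence flat) over `R` because `q` is transcendental. So the coinvariants of `k ⊗ B`
are the base change of the coinvariants `C` of `B`, and it suffices to find, for every `b ∈ C`,
some `r ≠ 0` in `R` with `r • b ∈ φ(A)`. Since `H ⊗ B` has no `(q - 1)`-torsion, the hypothesis
on `B/(q-1)B` gives `C_j ⊆ φ(A) + (q - 1) C_j` for the homogeneous pieces `C_j = C ∩ B_j`.
Each `C_j` is finitely generated, so Nakayama provides `r ≡ 1 mod (q - 1)` with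
`r C_j ⊆ φ(A)`, and `r ≠ 0` because it takes the value `1` at `q = 1`.
-/

open TensorProduct LaurentPolynomial
open scoped Pointwise

namespace LaurentPolynomial

variable {k₀ : Type*}

instance [Field k₀] : IsDedekindDomain k₀[T;T⁻¹] :=
  IsLocalization.isDedekindDomain (Polynomial k₀)
    (powers_le_nonZeroDivisors_of_noZeroDivisors Polynomial.X_ne_zero) _

theorem T_one_sub_one_ne_zero [CommRing k₀] [Nontrivial k₀] :
    (T 1 - 1 : k₀[T;T⁻¹]) ≠ 0 := by
  rw [sub_ne_zero, ← T_zero]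
  intro h
  have := congrArg degree h
  rw [degree_T, degree_T] at this
  exact one_ne_zero (WithBot.coe_injective this)

theorem ne_zero_of_sub_one_mem_span_T_one_sub_one [CommRing k₀] [Nontrivial k₀]
    {r : k₀[T;T⁻¹]} (hr : r - 1 ∈ Ideal.span {T 1 - 1}) : r ≠ 0 := by
  rintro rfl
  obtain ⟨c, hc⟩ := Ideal.mem_span_singleton'.mp hr
  simpa [eval₂_T] using congrArg (eval₂ (RingHom.id k₀) 1) hc

theorem algebraMap_injective_of_transcendental [CommRing k₀] {K : Type*} [CommRing K]
    [Algebra k₀ K] [Algebra k₀[T;T⁻¹] K] [IsScalarTower k₀ k₀[T;T⁻¹] K]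
    (h : Transcendental k₀ (algebraMap k₀[T;T⁻¹] K (T 1))) :
    Function.Injective (algebraMap k₀[T;T⁻¹] K) := by
  refine (injective_iff_map_eq_zero _).mpr fun f hf => ?_
  obtain ⟨n, p, hp⟩ := f.exists_T_pow
  have haeval : Polynomial.aeval (T 1 : k₀[T;T⁻¹]) p = Polynomial.toLaurent p := by
    rw [← Polynomial.toLaurentAlg_apply]
    congr 1
    exact Polynomial.algHom_ext (by simp)
  have hp0 : p = 0 := by
    refine (transcendental_iff_injective.mp h).eq_iff.mp ?_
    rw [map_zero, Polynomial.aeval_algebraMap_apply, haeval, hp, map_mul, hf, zero_mul]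
  rwa [hp0, map_zero, eq_comm, (isUnit_T _).mul_left_eq_zero] at hp

end LaurentPolynomial

namespace DirectSum

variable {ι R M : Type*} [DecidableEq ι] [Semiring R] [AddCommMonoid M] [Module R M]
  (N : ι → Submodule R M) [Decomposition N]

def decomposeProj (i : ι) : M →ₗ[R] M :=
  (N i).subtype ∘ₗ component R ι (fun i => N i) i ∘ₗ (decomposeLinearEquiv N).toLinearMap

@[simp]
theorem decomposeProj_apply (i : ι) (x : M) : decomposeProj N i x = decompose N x i := rfl

theorem decomposeProj_mem (i : ι) (x : M) : decomposeProj N i x ∈ N i :=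
  (decompose N x i).2

theorem decomposeProj_comp_subtype (i j : ι) :
    decomposeProj N j ∘ₗ (N i).subtype = if i = j then (N i).subtype else 0 := by
  ext ⟨x, hx⟩
  split_ifs with hij
  · subst hij
    exact decompose_of_mem_same N hx
  · exact decompose_of_mem_ne N hx hij

theorem comp_decomposeProj_eq {P : Type*} [AddCommMonoid P] [Module R P] (f : M →ₗ[R] P)
    (ψ : P →ₗ[R] P) (j : ι)
    (h : ∀ i, ψ ∘ₗ f ∘ₗ (N i).subtype = if i = j then f ∘ₗ (N i).subtype else 0) :
    f ∘ₗ decomposeProj N j = ψ ∘ₗ f := by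
  refine decompose_lhom_ext N fun i => ?_
  rw [LinearMap.comp_assoc, decomposeProj_comp_subtype, LinearMap.comp_assoc, h]
  split_ifs <;> simp

theorem le_iSup_inf_of_decomposeProj_mem {P : Submodule R M}
    (hP : ∀ j, ∀ x ∈ P, decomposeProj N j x ∈ P) : P ≤ ⨆ j, P ⊓ N j := by
  classical
  intro x hx
  rw [← sum_support_decompose N x]
  exact Submodule.sum_mem _ fun j _ =>
    Submodule.mem_iSup_of_mem j ⟨hP j x hx, decomposeProj_mem N j x⟩

end DirectSum

section BaseChange

variable {R A M N : Type*} [CommRing R] [CommRing A] [Algebra R A]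
  [AddCommGroup M] [Module R M] [AddCommGroup N] [Module R N]

theorem LinearMap.eqLocus_baseChange [Module.Flat R A] (f g : M →ₗ[R] N) :
    LinearMap.eqLocus (f.baseChange A) (g.baseChange A) = (LinearMap.eqLocus f g).baseChange A :=
  Module.Flat.eqLocus_lTensor_eq A A f g

theorem LinearMap.range_baseChange_le_baseChange {f : M →ₗ[R] N} {P : Submodule R N}
    (h : LinearMap.range f ≤ P) : LinearMap.range (f.baseChange A) ≤ P.baseChange A := by
  rw [← LinearMap.subtype_comp_codRestrict (f := f) P fun m => h ⟨m, rfl⟩,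
    LinearMap.baseChange_comp]
  exact LinearMap.range_comp_le_range _ _

theorem LinearMap.one_tmul_mem_range_baseChange_of_smul_mem (f : M →ₗ[R] N) {r : R}
    (hr : IsUnit (algebraMap R A r)) {n : N} (h : r • n ∈ LinearMap.range f) :
    (1 : A) ⊗ₜ[R] n ∈ LinearMap.range (f.baseChange A) := by
  obtain ⟨m, hm⟩ := h
  refine ⟨(↑hr.unit⁻¹ : A) ⊗ₜ m, ?_⟩
  rw [LinearMap.baseChange_tmul, hm, tmul_smul, smul_tmul', Algebra.smul_def,
    IsUnit.mul_val_inv]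

theorem LinearMap.baseChange_iSup_le_range_baseChange {ι : Type*} (f : M →ₗ[R] N)
    {P : ι → Submodule R N} {r : ι → R} (hr : ∀ i, IsUnit (algebraMap R A (r i)))
    (hP : ∀ i, r i • P i ≤ LinearMap.range f) :
    (⨆ i, P i).baseChange A ≤ LinearMap.range (f.baseChange A) := by
  rw [Submodule.baseChange_eq_span, Submodule.span_le]
  refine (Submodule.map_le_iff_le_comap
    (q := (LinearMap.range (f.baseChange A)).restrictScalars R)).mpr (iSup_le fun i n hn => ?_)
  exact f.one_tmul_mem_range_baseChange_of_smul_mem (hr i)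
    (hP i (Submodule.smul_mem_pointwise_smul n _ _ hn))

end BaseChange

section Coinvariants

variable {R H A B : Type*} [CommRing R] [Ring H] [Algebra R H]
  [AddCommGroup A] [Module R A] [AddCommGroup B] [Module R B]

def coinvariants (lam : B →ₗ[R] H ⊗[R] B) : Submodule R B :=
  LinearMap.eqLocus lam (TensorProduct.mk R H B 1)

theorem mem_coinvariants {lam : B →ₗ[R] H ⊗[R] B} {b : B} :
    b ∈ coinvariants lam ↔ lam b = (1 : H) ⊗ₜ[R] b :=
  LinearMap.mem_eqLocus

variable {J : Type*} [DecidableEq J] {lam : B →ₗ[R] H ⊗[R] B}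
  (Bj : J → Submodule R B) [DirectSum.Decomposition Bj]

open DirectSum in
theorem decomposeProj_mem_coinvariants
    (hlam : ∀ j, ∀ b ∈ Bj j, lam b ∈ LinearMap.range (LinearMap.lTensor H (Bj j).subtype))
    (j : J) {b : B} (hb : b ∈ coinvariants lam) : decomposeProj Bj j b ∈ coinvariants lam := by
  have hcomm : lam ∘ₗ decomposeProj Bj j = (decomposeProj Bj j).lTensor H ∘ₗ lam := by
    refine comp_decomposeProj_eq Bj lam _ j fun i => LinearMap.ext fun ⟨x, hx⟩ => ?_
    obtain ⟨z, hz⟩ := hlam i x hx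
    simp only [LinearMap.comp_apply, Submodule.coe_subtype, ← hz,
      ← LinearMap.lTensor_comp_apply, decomposeProj_comp_subtype]
    split_ifs <;> simp [hz]
  rw [mem_coinvariants] at hb ⊢
  rw [← LinearMap.comp_apply, hcomm, LinearMap.comp_apply, hb, LinearMap.lTensor_tmul]

end Coinvariants

section Reduction

open DirectSum

variable {R H A B J : Type*} [CommRing R] [Ring H] [Algebra R H]
  [AddCommGroup A] [Module R A] [AddCommGroup B] [Module R B] [DecidableEq J]
  {lam : B →ₗ[R] H ⊗[R] B} {φ : A →ₗ[R] B}
  {Aj : J → Submodule R A} (Bj : J → Submodule R B) [Decomposition Aj] [Decomposition Bj]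

theorem coinvariants_inf_le_range_sup_smul (hφ : ∀ a, φ a ∈ coinvariants lam)
    (hφj : ∀ j, ∀ a ∈ Aj j, φ a ∈ Bj j)
    (hlam : ∀ j, ∀ b ∈ Bj j, lam b ∈ LinearMap.range (LinearMap.lTensor H (Bj j).subtype))
    {t : R} (ht : IsSMulRegular (H ⊗[R] B) t)
    (hred : ∀ b ∈ coinvariants lam, ∃ (a : A) (b' : B), b = φ a + t • b') (j : J) :
    coinvariants lam ⊓ Bj j ≤
      LinearMap.range φ ⊔ Ideal.span {t} • (coinvariants lam ⊓ Bj j) := by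
  intro b hb
  obtain ⟨hb, hbj⟩ := Submodule.mem_inf.mp hb
  obtain ⟨a, b', rfl⟩ := hred b hb
  have hb' : b' ∈ coinvariants lam := by
    rw [mem_coinvariants] at hb ⊢
    apply ht
    simpa [mem_coinvariants.mp (hφ a), tmul_add] using hb
  have hφcomm : φ ∘ₗ decomposeProj Aj j = decomposeProj Bj j ∘ₗ φ := by
    refine comp_decomposeProj_eq Aj φ _ j fun i => ?_
    rw [← LinearMap.subtype_comp_codRestrict (f := φ ∘ₗ (Aj i).subtype) (Bj i)
      fun a => hφj i a a.2, ← LinearMap.comp_assoc, decomposeProj_comp_subtype]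
    split_ifs <;> simp
  rw [← decompose_of_mem_same Bj hbj, ← decomposeProj_apply, map_add, map_smul,
    ← LinearMap.comp_apply (decomposeProj Bj j), ← hφcomm]
  exact Submodule.add_mem_sup (LinearMap.mem_range_self _ _)
    (Submodule.smul_mem_smul (Ideal.mem_span_singleton_self t)
      ⟨decomposeProj_mem_coinvariants Bj hlam j hb', decomposeProj_mem Bj j b'⟩)

end Reduction

open TensorProduct in
theorem stmt_7_general (k₀ : Type*) [Field k₀]
    (k : Type*) [Field k] [Algebra k₀ k] [Algebra (LaurentPolynomial k₀) k]
    [IsScalarTower k₀ (LaurentPolynomial k₀) k]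
    (htrans : Transcendental k₀
      (algebraMap (LaurentPolynomial k₀) k (LaurentPolynomial.T 1)))
    (H : Type*) [Ring H] [Bialgebra (LaurentPolynomial k₀) H]
    (A B : Type*) [AddCommGroup A] [AddCommGroup B]
    [Module (LaurentPolynomial k₀) A] [Module (LaurentPolynomial k₀) B]
    (lam : B →ₗ[LaurentPolynomial k₀] H ⊗[LaurentPolynomial k₀] B)
    -- torsionfreeness of `B` and `H`
    (htfB : NoZeroSMulDivisors (LaurentPolynomial k₀) B)
    (htfH : NoZeroSMulDivisors (LaurentPolynomial k₀) H)
    (φ : A →ₗ[LaurentPolynomial k₀] B)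
    -- the image of `φ` consists of coinvariants
    (himg : ∀ a : A, lam (φ a) = (1 : H) ⊗ₜ[LaurentPolynomial k₀] (φ a))
    -- direct sum decompositions
    (J : Type*) [DecidableEq J] (Aj : J → Submodule (LaurentPolynomial k₀) A)
    (Bj : J → Submodule (LaurentPolynomial k₀) B)
    (hAdec : DirectSum.IsInternal Aj) (hBdec : DirectSum.IsInternal Bj)
    (hBfg : ∀ j, (Bj j).FG)
    (hφj : ∀ j, ∀ a ∈ Aj j, φ a ∈ Bj j)
    (hlamj : ∀ j, ∀ b ∈ Bj j,
      lam b ∈ LinearMap.range (LinearMap.lTensor H (Bj j).subtype))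
    -- the coinvariants of `B/(q-1)B` over `H/(q-1)H` equal the image of `φ̄`
    (hred : ∀ b : B,
      (∃ z : H ⊗[LaurentPolynomial k₀] B,
        lam b - (1 : H) ⊗ₜ[LaurentPolynomial k₀] b =
          ((LaurentPolynomial.T 1 - 1 : LaurentPolynomial k₀)) • z) ↔
      (∃ (a : A) (b' : B), b = φ a +
          ((LaurentPolynomial.T 1 - 1 : LaurentPolynomial k₀)) • b')) :
    -- conclusion: coinvariants of `k ⊗ B` equal the image of `id ⊗ φ`
    ∀ x : k ⊗[LaurentPolynomial k₀] B,
      (LinearMap.baseChange k lam) x =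
        (LinearMap.baseChange k ((TensorProduct.mk (LaurentPolynomial k₀) H B) 1)) x
      ↔ x ∈ LinearMap.range (LinearMap.baseChange k φ) := by
  have hinj := algebraMap_injective_of_transcendental htrans
  have : Module.IsTorsionFree (LaurentPolynomial k₀) k :=
    Module.isTorsionFree_iff_algebraMap_injective.mpr hinj
  let := hAdec.chooseDecomposition
  let := hBdec.chooseDecomposition
  have hφ : ∀ a, φ a ∈ coinvariants lam := fun a => mem_coinvariants.mpr (himg a)
  have hsmul : ∀ j, ∃ r : LaurentPolynomial k₀, r - 1 ∈ Ideal.span {T 1 - 1} ∧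
      r • (coinvariants lam ⊓ Bj j) ≤ LinearMap.range φ := fun j =>
    Submodule.exists_sub_one_mem_and_smul_le_of_fg_of_le_sup ((hBfg j).of_le inf_le_right) le_rfl
      (coinvariants_inf_le_range_sup_smul Bj hφ hφj hlamj
        (IsSMulRegular.of_ne_zero T_one_sub_one_ne_zero)
        (fun b hb => (hred b).mp ⟨0, by simp [mem_coinvariants.mp hb]⟩) j)
  choose r hr1 hr using hsmul
  have hC : coinvariants lam = ⨆ j, coinvariants lam ⊓ Bj j :=
    le_antisymm (DirectSum.le_iSup_inf_of_decomposeProj_mem Bj fun j _ =>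
      decomposeProj_mem_coinvariants Bj hlamj j) (iSup_le fun _ => inf_le_left)
  suffices h : (coinvariants lam).baseChange k = LinearMap.range (φ.baseChange k) by
    intro x
    rw [← LinearMap.mem_eqLocus, LinearMap.eqLocus_baseChange]
    exact SetLike.ext_iff.mp h x
  refine le_antisymm ?_ (LinearMap.range_baseChange_le_baseChange ?_)
  · rw [hC]
    exact φ.baseChange_iSup_le_range_baseChange (fun j =>
      ((map_ne_zero_iff _ hinj).mpr (ne_zero_of_sub_one_mem_span_T_one_sub_one (hr1 j))).isUnit) hr
  · rintro _ ⟨a, rfl⟩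
    exact hφ a

open TensorProduct in
/-- Quantum First Fundamental Theorem transfer: `R = k°[q,q⁻¹]`
with `q = T 1` transcendental over `k°` in a field `k`.  `H` is an
`R`-bialgebra and `B` a left `H`-comodule with structure map `lam`, both
torsionfree over `R`; `φ : A → B` has image in the coinvariants.  Given
compatible direct sum decompositions with the `B_j` finitely generated, if the
coinvariants of `B/(q-1)B` equal the image of the reduced map `φ̄`, then the
coinvariants of `k ⊗_R B` (over the `k`-bialgebra `k ⊗_R H`) equal the image
of `id ⊗ φ`. -/
theorem stmt_7 (k₀ : Type*) [Field k₀]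
    (k : Type*) [Field k] [Algebra k₀ k] [Algebra (LaurentPolynomial k₀) k]
    [IsScalarTower k₀ (LaurentPolynomial k₀) k]
    (htrans : Transcendental k₀
      (algebraMap (LaurentPolynomial k₀) k (LaurentPolynomial.T 1)))
    (H : Type*) [Ring H] [Bialgebra (LaurentPolynomial k₀) H]
    (A B : Type*) [AddCommGroup A] [AddCommGroup B]
    [Module (LaurentPolynomial k₀) A] [Module (LaurentPolynomial k₀) B]
    (lam : B →ₗ[LaurentPolynomial k₀] H ⊗[LaurentPolynomial k₀] B)
    -- comodule axioms for `lam`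
    (hcounit : ∀ b : B, (TensorProduct.lid (LaurentPolynomial k₀) B)
      ((LinearMap.rTensor B (Coalgebra.counit (R := LaurentPolynomial k₀) (A := H)))
        (lam b)) = b)
    (hcoassoc : ∀ b : B, (TensorProduct.assoc (LaurentPolynomial k₀) H H B)
      ((LinearMap.rTensor B (Coalgebra.comul (R := LaurentPolynomial k₀) (A := H)))
        (lam b)) = (LinearMap.lTensor H lam) (lam b))
    -- torsionfreeness of `B` and `H`
    (htfB : NoZeroSMulDivisors (LaurentPolynomial k₀) B)
    (htfH : NoZeroSMulDivisors (LaurentPolynomial k₀) H)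
    (φ : A →ₗ[LaurentPolynomial k₀] B)
    -- the image of `φ` consists of coinvariants
    (himg : ∀ a : A, lam (φ a) = (1 : H) ⊗ₜ[LaurentPolynomial k₀] (φ a))
    -- direct sum decompositions
    (J : Type*) [DecidableEq J] (Aj : J → Submodule (LaurentPolynomial k₀) A)
    (Bj : J → Submodule (LaurentPolynomial k₀) B)
    (hAdec : DirectSum.IsInternal Aj) (hBdec : DirectSum.IsInternal Bj)
    (hBfg : ∀ j, (Bj j).FG)
    (hφj : ∀ j, ∀ a ∈ Aj j, φ a ∈ Bj j)
    (hlamj : ∀ j, ∀ b ∈ Bj j,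
      lam b ∈ LinearMap.range (LinearMap.lTensor H (Bj j).subtype))
    -- the coinvariants of `B/(q-1)B` over `H/(q-1)H` equal the image of `φ̄`
    (hred : ∀ b : B,
      (∃ z : H ⊗[LaurentPolynomial k₀] B,
        lam b - (1 : H) ⊗ₜ[LaurentPolynomial k₀] b =
          ((LaurentPolynomial.T 1 - 1 : LaurentPolynomial k₀)) • z) ↔
      (∃ (a : A) (b' : B), b = φ a +
          ((LaurentPolynomial.T 1 - 1 : LaurentPolynomial k₀)) • b')) :
    -- conclusion: coinvariants of `k ⊗ B` equal the image of `id ⊗ φ`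
    ∀ x : k ⊗[LaurentPolynomial k₀] B,
      (LinearMap.baseChange k lam) x =
        (LinearMap.baseChange k ((TensorProduct.mk (LaurentPolynomial k₀) H B) 1)) x
      ↔ x ∈ LinearMap.range (LinearMap.baseChange k φ) :=
  stmt_7_general k₀ k htrans H A B lam htfB htfH φ himg J Aj Bj hAdec hBdec hBfg hφj hlamj hred
end

section
/- The quantum matrix multiplication map μ_q*: O_q(M_{m,n}(R)) → O_q(M_{m,t}(R)) ⊗_R O_q(M_{t,n}(R)) determined by X_{ij} ↦ Σ_{l=1}^t X_{il}⊗X_{lj} is a well-defined R-algebra homomorphism, and it is homogeneous doubling degrees: μ_q*(degree-j component) ⊆ degree-2j component of the tensor product grading. -/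
/-!
The map is obtained from the universal property of `O_q(M_{m,n}(R))` once one knows that the
product `Z = X Y` of a quantum matrix `X` and a quantum matrix `Y` with entries in the two tensor
factors is again a quantum matrix. Expanding a relation for `Z` gives two double sums over
`(a, b)`; they agree term by term on the diagonal `a = b`, and on each pair `{(a, b), (b, a)}`
with `a < b` after rewriting with the relations of `X` and `Y` and using `q q⁻¹ = 1`.

For the degrees, the submodules `T_d = span {x ⊗ y | x, y of degree d}` satisfy
`T_a T_b ⊆ T_(a+b)`, and every `μ(X_ij)` lies in `T_1`; hence `μ` maps a word of length `d` into
`T_d`, which sits in total degree `2d`.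
-/

/-- The defining relations of the quantum matrix algebra `O_q(M_{m,n}(R))`. -/
inductive QMatRel (R : Type*) [CommRing R] (q : Rˣ) (m n : ℕ) :
    FreeAlgebra R (Fin m × Fin n) → FreeAlgebra R (Fin m × Fin n) → Prop
  | row {i : Fin m} {j l : Fin n} (h : j < l) :
      QMatRel R q m n (FreeAlgebra.ι R (i, j) * FreeAlgebra.ι R (i, l))
        ((q : R) • (FreeAlgebra.ι R (i, l) * FreeAlgebra.ι R (i, j)))
  | col {i k : Fin m} {j : Fin n} (h : i < k) :
      QMatRel R q m n (FreeAlgebra.ι R (i, j) * FreeAlgebra.ι R (k, j))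
        ((q : R) • (FreeAlgebra.ι R (k, j) * FreeAlgebra.ι R (i, j)))
  | antidiag {i k : Fin m} {j l : Fin n} (hik : i < k) (hjl : j < l) :
      QMatRel R q m n (FreeAlgebra.ι R (i, l) * FreeAlgebra.ι R (k, j))
        (FreeAlgebra.ι R (k, j) * FreeAlgebra.ι R (i, l))
  | diag {i k : Fin m} {j l : Fin n} (hik : i < k) (hjl : j < l) :
      QMatRel R q m n (FreeAlgebra.ι R (i, j) * FreeAlgebra.ι R (k, l))
        (FreeAlgebra.ι R (k, l) * FreeAlgebra.ι R (i, j) +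
          ((q : R) - ((q⁻¹ : Rˣ) : R)) •
            (FreeAlgebra.ι R (i, l) * FreeAlgebra.ι R (k, j)))

/-- The quantum matrix algebra `O_q(M_{m,n}(R))`. -/
def QMatrixAlgebra (R : Type*) [CommRing R] (q : Rˣ) (m n : ℕ) : Type _ :=
  RingQuot (QMatRel R q m n)

noncomputable instance (R : Type*) [CommRing R] (q : Rˣ) (m n : ℕ) :
    Ring (QMatrixAlgebra R q m n) := inferInstanceAs (Ring (RingQuot _))

noncomputable instance (R : Type*) [CommRing R] (q : Rˣ) (m n : ℕ) :
    Algebra R (QMatrixAlgebra R q m n) := inferInstanceAs (Algebra R (RingQuot _))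

/-- The generators `X_{ij}` of the quantum matrix algebra. -/
noncomputable def qmX (R : Type*) [CommRing R] (q : Rˣ) (m n : ℕ)
    (p : Fin m × Fin n) : QMatrixAlgebra R q m n :=
  RingQuot.mkAlgHom R (QMatRel R q m n) (FreeAlgebra.ι R p)

/-- The degree-`d` component of the quantum matrix algebra: the `R`-span of
the products of `d` generators. -/
noncomputable def qmDeg (R : Type*) [CommRing R] (q : Rˣ) (m n : ℕ) (d : ℕ) :
    Submodule R (QMatrixAlgebra R q m n) :=
  Submodule.span R
    {x | ∃ l : List (Fin m × Fin n), l.length = d ∧ x = (l.map (qmX R q m n)).prod}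

open TensorProduct

theorem Finset.sum_sum_eq_of_diag_of_lt {M ι : Type*} [AddCommMonoid M] [LinearOrder ι]
    (s : Finset ι) {F G : ι → ι → M} (hdiag : ∀ a, F a a = G a a)
    (hlt : ∀ a b, a < b → F a b + F b a = G a b + G b a) :
    ∑ a ∈ s, ∑ b ∈ s, F a b = ∑ a ∈ s, ∑ b ∈ s, G a b := by
  classical
  induction s using Finset.induction_on with
  | empty => simp
  | insert a s ha ih =>
    have hcross : ∑ b ∈ s, (F a b + F b a) = ∑ b ∈ s, (G a b + G b a) := by
      refine Finset.sum_congr rfl fun b hb => ?_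
      rcases lt_or_gt_of_ne (ne_of_mem_of_not_mem hb ha).symm with hab | hba
      · exact hlt a b hab
      · rw [add_comm (F a b), add_comm (G a b)]
        exact hlt b a hba
    simp only [Finset.sum_insert ha, Finset.sum_add_distrib] at hcross ih ⊢
    rw [hdiag a, ih]
    simp only [← add_assoc]
    rw [add_assoc (G a a), hcross, ← add_assoc]

section QuantumMatrix

variable {R : Type*} [CommRing R] (q : Rˣ)

structure IsQuantumMatrix {A : Type*} [Semiring A] [Algebra R A] {m n : ℕ}
    (X : Fin m → Fin n → A) : Prop where
  row {i : Fin m} {j l : Fin n} : j < l → X i j * X i l = (q : R) • (X i l * X i j)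
  col {i k : Fin m} {j : Fin n} : i < k → X i j * X k j = (q : R) • (X k j * X i j)
  antidiag {i k : Fin m} {j l : Fin n} : i < k → j < l → X i l * X k j = X k j * X i l
  diag {i k : Fin m} {j l : Fin n} : i < k → j < l →
    X i j * X k l = X k l * X i j + ((q : R) - ((q⁻¹ : Rˣ) : R)) • (X i l * X k j)

variable {q}

variable {A B : Type*} [Semiring A] [Algebra R A] [Semiring B] [Algebra R B] {m n t : ℕ}

theorem sum_tmul_mul_sum_tmul (X : Fin m → Fin t → A) (Y : Fin t → Fin n → B) (i k : Fin m)
    (j l : Fin n) :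
    (∑ a, X i a ⊗ₜ[R] Y a j) * (∑ b, X k b ⊗ₜ[R] Y b l) =
      ∑ a, ∑ b, (X i a * X k b) ⊗ₜ[R] (Y a j * Y b l) := by
  simp only [Finset.sum_mul_sum, Algebra.TensorProduct.tmul_mul_tmul]

theorem IsQuantumMatrix.sum_tmul {X : Fin m → Fin t → A} {Y : Fin t → Fin n → B}
    (hX : IsQuantumMatrix q X) (hY : IsQuantumMatrix q Y) :
    IsQuantumMatrix q fun i j => ∑ a, X i a ⊗ₜ[R] Y a j where
  row {i j l} hjl := by
    simp only [sum_tmul_mul_sum_tmul, Finset.smul_sum]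
    refine Finset.sum_sum_eq_of_diag_of_lt _ (fun a => ?_) (fun a b hab => ?_)
    · rw [hY.row hjl, tmul_smul]
    · rw [hX.row hab, hY.diag hab hjl, hY.antidiag hab hjl]
      simp only [tmul_add, tmul_smul, ← smul_tmul', smul_smul]
      match_scalars <;> grind [Units.inv_mul]
  col {i k j} hik := by
    simp only [sum_tmul_mul_sum_tmul, Finset.smul_sum]
    refine Finset.sum_sum_eq_of_diag_of_lt _ (fun a => ?_) (fun a b hab => ?_)
    · rw [hX.col hik, smul_tmul']
    · rw [hY.col hab, hX.diag hik hab, hX.antidiag hik hab]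
      simp only [add_tmul, tmul_smul, ← smul_tmul', smul_add, smul_smul]
      match_scalars <;> grind [Units.inv_mul]
  antidiag {i k j l} hik hjl := by
    simp only [sum_tmul_mul_sum_tmul]
    refine Finset.sum_sum_eq_of_diag_of_lt _ (fun a => ?_) (fun a b hab => ?_)
    · rw [hX.col hik, hY.row hjl, tmul_smul, smul_tmul']
    · rw [hX.diag hik hab, hX.antidiag hik hab, hY.diag hab hjl, hY.antidiag hab hjl]
      simp only [tmul_add, add_tmul, tmul_smul, ← smul_tmul']
      abel
  diag {i k j l} hik hjl := by
    simp only [sum_tmul_mul_sum_tmul, Finset.smul_sum, ← Finset.sum_add_distrib]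
    refine Finset.sum_sum_eq_of_diag_of_lt _ (fun a => ?_) (fun a b hab => ?_)
    · rw [hX.col hik, hY.row hjl]
      simp only [tmul_smul, ← smul_tmul', smul_smul]
      match_scalars
      grind [Units.inv_mul]
    · rw [hX.diag hik hab, hX.antidiag hik hab, hY.diag hab hjl, hY.antidiag hab hjl]
      simp only [tmul_add, add_tmul, tmul_smul, ← smul_tmul', smul_add, smul_smul]
      match_scalars <;> grind [Units.inv_mul]

variable (R q m n) in
theorem isQuantumMatrix_qmX : IsQuantumMatrix q fun i j => qmX R q m n (i, j) where
  row {i} _ _ h := by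
    have := RingQuot.mkAlgHom_rel R (QMatRel.row (q := q) (i := i) h)
    simp only [map_mul, map_smul] at this
    exact this
  col {_ _ j} h := by
    have := RingQuot.mkAlgHom_rel R (QMatRel.col (q := q) (j := j) h)
    simp only [map_mul, map_smul] at this
    exact this
  antidiag hik hjl := by
    have := RingQuot.mkAlgHom_rel R (QMatRel.antidiag (q := q) hik hjl)
    simp only [map_mul] at this
    exact this
  diag hik hjl := by
    have := RingQuot.mkAlgHom_rel R (QMatRel.diag (q := q) hik hjl)
    simp only [map_mul, map_add, map_smul] at this
    exact this

namespace QMatrixAlgebra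

noncomputable def lift {X : Fin m → Fin n → A} (hX : IsQuantumMatrix q X) :
    QMatrixAlgebra R q m n →ₐ[R] A :=
  RingQuot.liftAlgHom R ⟨FreeAlgebra.lift R fun p => X p.1 p.2, fun _ _ h => by
    induction h with
    | row h => simpa only [map_mul, map_smul, FreeAlgebra.lift_ι_apply] using hX.row h
    | col h => simpa only [map_mul, map_smul, FreeAlgebra.lift_ι_apply] using hX.col h
    | antidiag hik hjl => simpa only [map_mul, FreeAlgebra.lift_ι_apply] using hX.antidiag hik hjl
    | diag hik hjl =>
      simpa only [map_mul, map_add, map_smul, FreeAlgebra.lift_ι_apply] using hX.diag hik hjl⟩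

@[simp]
theorem lift_qmX {X : Fin m → Fin n → A} (hX : IsQuantumMatrix q X) (p : Fin m × Fin n) :
    lift hX (qmX R q m n p) = X p.1 p.2 := by
  rw [lift, qmX]
  exact (RingQuot.liftAlgHom_mkAlgHom_apply R _ _ _).trans (FreeAlgebra.lift_ι_apply _ _)

end QMatrixAlgebra

end QuantumMatrix

section DiagonalGrading

variable {R ι A B : Type*} [CommSemiring R] [AddMonoid ι] [Semiring A] [Algebra R A]
  [Semiring B] [Algebra R B]

noncomputable def tensorDiagGrading (M : ι → Submodule R A) (N : ι → Submodule R B) (i : ι) :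
    Submodule R (A ⊗[R] B) :=
  Submodule.map₂ (TensorProduct.mk R A B) (M i) (N i)

instance (M : ι → Submodule R A) (N : ι → Submodule R B) [SetLike.GradedMonoid M]
    [SetLike.GradedMonoid N] : SetLike.GradedMonoid (tensorDiagGrading M N) where
  one_mem := Submodule.apply_mem_map₂ _ (SetLike.one_mem_graded M) (SetLike.one_mem_graded N)
  mul_mem i j x y hx hy := by
    rw [tensorDiagGrading, Submodule.map₂_eq_span_image2] at hx hy ⊢
    have hxy := Submodule.mul_mem_mul hx hy
    rw [Submodule.span_mul_span] at hxy
    refine Submodule.span_le.2 ?_ hxy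
    rintro _ ⟨_, ⟨a, ha, b, hb, rfl⟩, _, ⟨c, hc, d, hd, rfl⟩, rfl⟩
    exact Submodule.subset_span ⟨a * c, SetLike.mul_mem_graded ha hc, b * d,
      SetLike.mul_mem_graded hb hd, (Algebra.TensorProduct.tmul_mul_tmul _ _ _ _).symm⟩

end DiagonalGrading

section Degree

variable {R : Type*} [CommRing R] {q : Rˣ} {m n : ℕ}

instance : SetLike.GradedMonoid (qmDeg R q m n) where
  one_mem := Submodule.subset_span ⟨[], rfl, List.prod_nil.symm⟩
  mul_mem i j x y hx hy := by
    have hxy := Submodule.mul_mem_mul hx hy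
    rw [qmDeg, qmDeg, Submodule.span_mul_span] at hxy
    refine Submodule.span_le.2 ?_ hxy
    rintro _ ⟨_, ⟨l, rfl, rfl⟩, _, ⟨l', rfl, rfl⟩, rfl⟩
    exact Submodule.subset_span ⟨l ++ l', List.length_append, by simp⟩

theorem qmX_mem_qmDeg_one (p : Fin m × Fin n) : qmX R q m n p ∈ qmDeg R q m n 1 :=
  Submodule.subset_span ⟨[p], rfl, by simp⟩

theorem map_qmDeg_le {C : Type*} [Semiring C] [Algebra R C] (P : ℕ → Submodule R C)
    [SetLike.GradedMonoid P] (f : QMatrixAlgebra R q m n →ₐ[R] C)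
    (hf : ∀ p, f (qmX R q m n p) ∈ P 1) (d : ℕ) :
    (qmDeg R q m n d).map f.toLinearMap ≤ P d := by
  rw [qmDeg, Submodule.map_span, Submodule.span_le]
  rintro _ ⟨_, ⟨l, rfl, rfl⟩, rfl⟩
  rw [AlgHom.toLinearMap_apply, map_list_prod, List.map_map]
  simpa using SetLike.list_prod_map_mem_graded l (fun _ => 1) (f ∘ qmX R q m n) fun p _ => hf p

end Degree

open TensorProduct in
/-- The quantum matrix multiplication map
`μ_q* : O_q(M_{m,n}(R)) → O_q(M_{m,t}(R)) ⊗_R O_q(M_{t,n}(R))`,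
`X_{ij} ↦ Σ_l X_{il} ⊗ X_{lj}`, is a well-defined `R`-algebra homomorphism,
and it doubles degrees: it maps the degree-`j` component into the total
degree-`2j` component of the tensor product grading. -/
theorem stmt_16 (R : Type*) [CommRing R] (q : Rˣ) (m n t : ℕ) :
    ∃ μ : QMatrixAlgebra R q m n →ₐ[R]
        (QMatrixAlgebra R q m t ⊗[R] QMatrixAlgebra R q t n),
      (∀ p : Fin m × Fin n, μ (qmX R q m n p) =
        ∑ l : Fin t, qmX R q m t (p.1, l) ⊗ₜ[R] qmX R q t n (l, p.2)) ∧
      (∀ j : ℕ, Submodule.map μ.toLinearMap (qmDeg R q m n j) ≤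
        Submodule.span R
          {z : QMatrixAlgebra R q m t ⊗[R] QMatrixAlgebra R q t n |
            ∃ (a b : ℕ) (x : QMatrixAlgebra R q m t) (y : QMatrixAlgebra R q t n),
              a + b = 2 * j ∧ x ∈ qmDeg R q m t a ∧ y ∈ qmDeg R q t n b ∧
                z = x ⊗ₜ[R] y}) := by
  let μ := QMatrixAlgebra.lift <|
    (isQuantumMatrix_qmX R q m t).sum_tmul (isQuantumMatrix_qmX R q t n)
  refine ⟨μ, QMatrixAlgebra.lift_qmX _, fun j => ?_⟩
  have hμ (p : Fin m × Fin n) :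
      μ (qmX R q m n p) ∈ tensorDiagGrading (qmDeg R q m t) (qmDeg R q t n) 1 := by
    rw [QMatrixAlgebra.lift_qmX]
    exact Submodule.sum_mem _ fun a _ =>
      Submodule.apply_mem_map₂ _ (qmX_mem_qmDeg_one _) (qmX_mem_qmDeg_one _)
  refine (map_qmDeg_le _ μ hμ j).trans ?_
  rw [tensorDiagGrading, Submodule.map₂_eq_span_image2]
  refine Submodule.span_mono ?_
  rintro _ ⟨x, hx, y, hy, rfl⟩
  exact ⟨j, j, x, y, (two_mul j).symm, hx, hy, rfl⟩
end

section
/- In the polynomial ring O(M_n(k)), the functions tr_1, …, tr_n, where tr_i is the sum of all i×i principal minors of the generic matrix (X_{ij}), are invariant under the conjugation action of GL_n(k) and are algebraically independent over k. -/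
/-- `tr_i`: the sum of all `i×i` principal minors of the generic `n×n` matrix
`(X_{ij})`, as an element of `O(M_n(k)) = k[X_{ij}]`. -/
noncomputable def trPoly (k : Type*) [CommRing k] (n i : ℕ) :
    MvPolynomial (Fin n × Fin n) k :=
  ∑ s ∈ (Finset.univ : Finset (Fin n)).powersetCard i,
    Matrix.det (Matrix.of fun a b : ↥s =>
      (MvPolynomial.X ((a : Fin n), (b : Fin n)) : MvPolynomial (Fin n × Fin n) k))

/-!
The sum of the `k × k` principal minors of a matrix `M` is the `k`-th coefficient of
`det (1 + X • M)`, so it is unchanged when `M` is replaced by a conjugate `g⁻¹ M g`.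
Specialising the generic matrix to `diag (x₁, …, xₙ)` sends `tr_i` to the `i`-th elementary
symmetric polynomial in the `xⱼ`; these are algebraically independent (fundamental theorem of
symmetric polynomials), and a family whose image under an algebra map is algebraically
independent is itself algebraically independent.
-/

open Matrix Finset MvPolynomial

namespace Matrix

variable {n : Type*} [Fintype n] [DecidableEq n] {R S : Type*} [CommRing R] [CommRing S]

noncomputable def principalMinorSum (M : Matrix n n R) (k : ℕ) : R :=
  ∑ s ∈ univ.powersetCard k, (M.submatrix (Subtype.val : s → n) Subtype.val).det

lemma map_principalMinorSum (f : R →+* S) (M : Matrix n n R) (k : ℕ) :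
    f (M.principalMinorSum k) = (M.map f).principalMinorSum k := by
  simp only [principalMinorSum, map_sum, RingHom.map_det, RingHom.mapMatrix_apply, submatrix_map]

-- Both sides are the `k`-th coefficient of `det (1 + X • M)`, and `1 + X • M` is conjugated.
lemma principalMinorSum_units_conj' (U : (Matrix n n R)ˣ) (M : Matrix n n R) (k : ℕ) :
    (U⁻¹.val * M * U.val).principalMinorSum k = M.principalMinorSum k := by
  simp only [principalMinorSum, ← coeff_det_one_add_X_smul_eq_sum_minors]
  let V := Units.map (RingHom.mapMatrix (Polynomial.C : R →+* Polynomial R)).toMonoidHom U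
  have hconj : 1 + (Polynomial.X : Polynomial R) • (U⁻¹.val * M * U.val).map Polynomial.C =
      V⁻¹.val * (1 + (Polynomial.X : Polynomial R) • M.map Polynomial.C) * V.val := by
    simp [V, mul_add, add_mul, Matrix.map_mul]
  rw [hconj, det_units_conj']

lemma principalMinorSum_diagonal (d : n → R) (k : ℕ) :
    (diagonal d).principalMinorSum k = ∑ s ∈ univ.powersetCard k, ∏ i ∈ s, d i := by
  refine sum_congr rfl fun s _ => ?_
  rw [submatrix_diagonal _ _ Subtype.val_injective, det_diagonal]
  exact prod_coe_sort s d

lemma mvPolynomialX_map_aeval_conj {m : Type*} [Fintype m] (A B : Matrix m m R) :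
    (mvPolynomialX m m R).map
        (aeval fun p : m × m => ∑ a, ∑ b, C (A p.1 a * B b p.2) * X (a, b)) =
      A.map C * mvPolynomialX m m R * B.map C := by
  refine Matrix.ext fun i j => ?_
  simp only [map_apply, mvPolynomialX_apply, aeval_X, mul_apply, sum_mul, _root_.map_mul]
  rw [sum_comm]
  exact sum_congr rfl fun a _ => sum_congr rfl fun b _ => by ring

lemma mvPolynomialX_map_aeval_diagonal {m : Type*} [DecidableEq m] :
    (mvPolynomialX m m R).map (aeval fun p : m × m => if p.1 = p.2 then X p.1 else 0) =
      diagonal (X : m → MvPolynomial m R) := by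
  refine Matrix.ext fun i j => ?_
  simp [diagonal_apply]

end Matrix

namespace MvPolynomial

variable {R : Type*} [CommRing R]

lemma algebraicIndependent_esymm {σ : Type*} [Fintype σ] {m : ℕ}
    (hm : m ≤ Fintype.card σ) :
    AlgebraicIndependent R (fun i : Fin m => esymm σ R (i + 1)) := fun p q hpq =>
  esymmAlgHom_injective R hm (Subtype.ext (by simpa only [esymmAlgHom_apply] using hpq))

end MvPolynomial

lemma trPoly_eq_principalMinorSum (k : Type*) [CommRing k] (n i : ℕ) :
    trPoly k n i = (mvPolynomialX (Fin n) (Fin n) k).principalMinorSum i := rfl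

theorem stmt_19_general (k : Type*) [Field k] (n : ℕ) :
    (∀ g : GL (Fin n) k, ∀ i : ℕ, 1 ≤ i → i ≤ n →
      (MvPolynomial.aeval (fun p : Fin n × Fin n =>
        ∑ a : Fin n, ∑ b : Fin n,
          MvPolynomial.C (((↑(g⁻¹) : Matrix (Fin n) (Fin n) k) p.1 a) *
              ((↑g : Matrix (Fin n) (Fin n) k) b p.2)) *
            (MvPolynomial.X (a, b) : MvPolynomial (Fin n × Fin n) k)))
        (trPoly k n i) = trPoly k n i) ∧
    AlgebraicIndependent k (fun i : Fin n => trPoly k n (i.1 + 1)) := by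
  constructor
  · intro g i _ _
    let gC := Units.map (C : k →+* MvPolynomial (Fin n × Fin n) k).mapMatrix.toMonoidHom g
    rw [trPoly_eq_principalMinorSum, ← AlgHom.coe_toRingHom, map_principalMinorSum,
      AlgHom.coe_toRingHom, mvPolynomialX_map_aeval_conj]
    exact principalMinorSum_units_conj' gC _ i
  · let diag : MvPolynomial (Fin n × Fin n) k →ₐ[k] MvPolynomial (Fin n) k :=
      aeval fun p => if p.1 = p.2 then X p.1 else 0
    have h_diag (i : ℕ) : diag (trPoly k n i) = esymm (Fin n) k i := by
      rw [trPoly_eq_principalMinorSum, ← AlgHom.coe_toRingHom, map_principalMinorSum,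
        AlgHom.coe_toRingHom, mvPolynomialX_map_aeval_diagonal, principalMinorSum_diagonal, esymm]
    refine AlgebraicIndependent.of_comp diag ?_
    simpa only [Function.comp_def, h_diag] using
      algebraicIndependent_esymm (R := k) (Fintype.card_fin n).ge

/-- Over a field `k` of characteristic zero, the functions
`tr_1, …, tr_n ∈ O(M_n(k))` are invariant under the conjugation action of
`GL_n(k)` (substituting `g⁻¹ X g` for the generic matrix fixes each `tr_i`)
and are algebraically independent over `k`. -/
theorem stmt_19 (k : Type*) [Field k] [CharZero k] (n : ℕ) :
    (∀ g : GL (Fin n) k, ∀ i : ℕ, 1 ≤ i → i ≤ n →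
      (MvPolynomial.aeval (fun p : Fin n × Fin n =>
        ∑ a : Fin n, ∑ b : Fin n,
          MvPolynomial.C (((↑(g⁻¹) : Matrix (Fin n) (Fin n) k) p.1 a) *
              ((↑g : Matrix (Fin n) (Fin n) k) b p.2)) *
            (MvPolynomial.X (a, b) : MvPolynomial (Fin n × Fin n) k)))
        (trPoly k n i) = trPoly k n i) ∧
    AlgebraicIndependent k (fun i : Fin n => trPoly k n (i.1 + 1)) :=
  stmt_19_general k n
end
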